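/- With f defined as above, f(z) = z/2 for every z in ⋃_{k≥0} W_k, where W_k = 2^{-k} W₀ and W₀ is the open diamond with vertices i, i/2, (3i+1)/4, (3i-1)/4. -/
import Mathlib


open Set Complex Filter

/-- The slice function `h_y`. -/
noncomputable def hy (y x : ℝ) : ℝ :=
  if |x| + |y - 3/4| < 1/4 then 1
  else if y ≤ |x| then 4
  else if y ≤ 3/4 then 6 * |x| - 6 * y + 4
  else (3 * |x| + 5 * y - 4) / (2 * y - 1)

/-- The map `h(x + iy) = h_y(x)·x + iy`. -/
noncomputable def hmap (z : ℂ) : ℂ := ⟨hy z.im z.re * z.re, z.im⟩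

/-- For `y > 0`, the unique integer `m` with `2^{-(m+1)} < y ≤ 2^{-m}`. -/
noncomputable def mval (y : ℝ) : ℤ := ⌊Real.logb 2 y⁻¹⌋

/-- The map `f`: equal to `2^{-(m+1)} h(2^m z)` when `Im z ∈ (2^{-(m+1)}, 2^{-m}]`,
and to `2x + iy/2` when `Im z ≤ 0`. -/
noncomputable def f (z : ℂ) : ℂ :=
  if z.im ≤ 0 then ⟨2 * z.re, z.im / 2⟩
  else (2 : ℂ) ^ (-(mval z.im + 1)) * hmap ((2 : ℂ) ^ (mval z.im) * z)

/-- The open diamond `W₀` with vertices `i`, `i/2`, `(3i+1)/4`, `(3i-1)/4`. -/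
def W0 : Set ℂ := {z : ℂ | |z.re| + |z.im - 3/4| < 1/4}

/-- The scaled diamonds `W_k = 2^{-k} W₀`. -/
def W (k : ℕ) : Set ℂ := (fun z : ℂ => (2 : ℂ) ^ (-(k : ℤ)) * z) '' W0

theorem stmt6 : ∀ z ∈ ⋃ k : ℕ, W k, f z = z / 2 := by
  intro z hz
  simp only [mem_iUnion, W, mem_image] at hz
  obtain ⟨k, w, hw, rfl⟩ := hz
  have hw' : |w.re| + |w.im - 3/4| < 1/4 := hw
  have habs : |w.im - 3/4| < 1/4 :=
    lt_of_le_of_lt (le_add_of_nonneg_left (abs_nonneg _)) hw'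
  obtain ⟨h1, h2⟩ := abs_lt.mp habs
  have him1 : 1/2 < w.im := by linarith
  have him2 : w.im < 1 := by linarith
  have hc : ((2:ℂ) ^ (-(k:ℤ))) = (((2:ℝ) ^ (-(k:ℤ)) : ℝ) : ℂ) := by push_cast; ring
  have hcpos : (0:ℝ) < (2:ℝ)^(-(k:ℤ)) := zpow_pos (by norm_num) _
  have hzim : ((2:ℂ)^(-(k:ℤ)) * w).im = (2:ℝ)^(-(k:ℤ)) * w.im := by
    rw [hc, Complex.im_ofReal_mul]
  have hwpos : 0 < w.im := by linarith
  have hwinv1 : 1 ≤ (w.im)⁻¹ := (one_le_inv₀ hwpos).mpr him2.le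
  have hwinv2 : (w.im)⁻¹ < 2 := by
    rw [inv_lt_iff_one_lt_mul₀ hwpos]; linarith
  have hlogb : Real.logb 2 (((2:ℝ)^(-(k:ℤ)) * w.im)⁻¹)
      = (k:ℝ) + Real.logb 2 (w.im)⁻¹ := by
    rw [mul_inv, ← zpow_neg, neg_neg, Real.logb_mul (by positivity) (by positivity),
      show ((2:ℝ)^((k:ℕ):ℤ)) = (2:ℝ)^(((k:ℕ):ℤ):ℝ) from (Real.rpow_intCast 2 k).symm,
      Real.logb_rpow (by norm_num) (by norm_num)]
    norm_num
  have hlb1 : 0 ≤ Real.logb 2 (w.im)⁻¹ := Real.logb_nonneg (by norm_num) hwinv1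
  have hlb2 : Real.logb 2 (w.im)⁻¹ < 1 := by
    refine (Real.logb_lt_iff_lt_rpow (by norm_num) (by positivity)).mpr ?_
    rw [Real.rpow_one]; exact hwinv2
  have hmval : mval (((2:ℂ)^(-(k:ℤ)) * w).im) = (k:ℤ) := by
    rw [mval, hzim, hlogb]
    rw [Int.floor_eq_iff]
    constructor
    · push_cast; linarith
    · push_cast; linarith
  have hne : (0:ℝ) < ((2:ℂ)^(-(k:ℤ)) * w).im := by rw [hzim]; positivity
  rw [f, if_neg (not_le.mpr hne), hmval]
  have hcancel : (2:ℂ)^((k:ℤ)) * ((2:ℂ)^(-(k:ℤ)) * w) = w := by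
    rw [← mul_assoc, ← zpow_add₀ (two_ne_zero), add_neg_cancel, zpow_zero, one_mul]
  rw [hcancel]
  have hmapw : hmap w = w := by
    rw [hmap, hy, if_pos hw']
    apply Complex.ext <;> simp
  rw [hmapw, neg_add, zpow_add₀ (two_ne_zero : (2:ℂ) ≠ 0)]
  rw [zpow_neg_one]
  ring
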